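/- Let K ⊂ ℝⁿ be a convex body containing r·B₂ⁿ for some r ∈ (0,1], covered as K ⊂ ⋃_{i=1}^N (x_i + B₂ⁿ) with x₁,…,x_N ∈ ℝⁿ. Let ε ∈ (0,1) and suppose θ ∈ S^{n−1} satisfies |⟨x_i/|x_i|, θ⟩| ≤ ε for every i with x_i ≠ 0. Then for every unit vector u with h_K(u) = ⟨u, ρ_K(θ)·θ⟩ (i.e. u in the normal cone of K at ρ_K(θ)·θ), one has ⟨u, θ⟩ ≥ r·√(1−ε²). -/

import Mathlib

open Metric Set MeasureTheory
open scoped RealInnerProductSpace ENNReal Pointwise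

abbrev Euc (n : ℕ) := EuclideanSpace ℝ (Fin n)

/-- The covering number `N(K, T)`: the minimal number of translates of `T`
needed to cover `K`. -/
noncomputable def coveringNumber {n : ℕ} (K T : Set (Euc n)) : ℕ :=
  sInf {N : ℕ | ∃ x : Fin N → Euc n, K ⊆ ⋃ i, x i +ᵥ T}

/-- The radial function `ρ_K(θ) = sup {t ≥ 0 : tθ ∈ K}`. -/
noncomputable def radialFn {n : ℕ} (K : Set (Euc n)) (θ : Euc n) : ℝ :=
  sSup {t : ℝ | 0 ≤ t ∧ t • θ ∈ K}

/-- The support function `h_K(u) = sup {⟨x, u⟩ : x ∈ K}`. -/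
noncomputable def suppFn {n : ℕ} (K : Set (Euc n)) (u : Euc n) : ℝ :=
  sSup ((fun x => ⟪x, u⟫) '' K)

/-- `F` is a facet of `P ⊆ ℝⁿ`: a nonempty exposed face of dimension `n - 1`. -/
def IsFacet {n : ℕ} (P F : Set (Euc n)) : Prop :=
  F.Nonempty ∧ IsExposed ℝ P F ∧ Module.finrank ℝ (vectorSpan ℝ F) = n - 1

/-!
Let `ρ = ρ_K(θ)`, so that `ρθ ∈ K`. Since `r u ∈ K`, the normal-cone condition gives
`r ≤ h_K(u) = ρ ⟨u, θ⟩`. On the other hand `ρθ` lies within distance `1` of some centre `x`, and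
`|⟨x, θ⟩| ≤ ε |x|` gives `|ρθ - x|² ≥ ρ² - 2ρε|x| + |x|² = (|x| - ρε)² + ρ²(1 - ε²)`, so
`ρ √(1 - ε²) ≤ 1`. Hence `r √(1 - ε²) ≤ ρ √(1 - ε²) ⟨u, θ⟩ ≤ ⟨u, θ⟩`.
-/

section InnerProduct

variable {E : Type*} [NormedAddCommGroup E] [InnerProductSpace ℝ E]

lemma abs_inner_le_mul_norm_of_abs_inner_normalize_le {x θ : E} {ε : ℝ}
    (h : x ≠ 0 → |⟪‖x‖⁻¹ • x, θ⟫| ≤ ε) : |⟪x, θ⟫| ≤ ε * ‖x‖ := by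
  rcases eq_or_ne x 0 with rfl | hx
  · simp
  have hnorm : 0 < ‖x‖ := norm_pos_iff.mpr hx
  have h' := h hx
  rw [real_inner_smul_left, abs_mul, abs_inv, abs_norm, inv_mul_le_iff₀ hnorm] at h'
  linarith

lemma sq_mul_one_sub_sq_le_norm_smul_sub_sq {x θ : E} {ε ρ : ℝ} (hθ : ‖θ‖ = 1)
    (hx : |⟪x, θ⟫| ≤ ε * ‖x‖) : ρ ^ 2 * (1 - ε ^ 2) ≤ ‖ρ • θ - x‖ ^ 2 := by
  have hexpand : ‖ρ • θ - x‖ ^ 2 = ρ ^ 2 - 2 * (ρ * ⟪x, θ⟫) + ‖x‖ ^ 2 := by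
    rw [norm_sub_sq_real, real_inner_smul_left, norm_smul, hθ, real_inner_comm x θ,
      Real.norm_eq_abs, mul_one, sq_abs]
  have hcross : ρ * ⟪x, θ⟫ ≤ |ρ| * (ε * ‖x‖) := by
    calc ρ * ⟪x, θ⟫ ≤ |ρ * ⟪x, θ⟫| := le_abs_self _
      _ = |ρ| * |⟪x, θ⟫| := abs_mul _ _
      _ ≤ |ρ| * (ε * ‖x‖) := mul_le_mul_of_nonneg_left hx (abs_nonneg ρ)
  rw [hexpand]
  nlinarith [sq_nonneg (‖x‖ - |ρ| * ε), sq_abs ρ]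

lemma mul_sqrt_one_sub_sq_le_norm_smul_sub {x θ : E} {ε ρ : ℝ} (hρ : 0 ≤ ρ) (hθ : ‖θ‖ = 1)
    (hx : |⟪x, θ⟫| ≤ ε * ‖x‖) : ρ * √(1 - ε ^ 2) ≤ ‖ρ • θ - x‖ := by
  calc ρ * √(1 - ε ^ 2) = √(ρ ^ 2 * (1 - ε ^ 2)) := by
        rw [Real.sqrt_mul (sq_nonneg ρ), Real.sqrt_sq hρ]
    _ ≤ √(‖ρ • θ - x‖ ^ 2) := Real.sqrt_le_sqrt (sq_mul_one_sub_sq_le_norm_smul_sub_sq hθ hx)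
    _ = ‖ρ • θ - x‖ := Real.sqrt_sq (norm_nonneg _)

end InnerProduct

section RadialSupport

variable {n : ℕ} {K : Set (Euc n)}

lemma isCompact_radialSet (hK : IsCompact K) {θ : Euc n} (hθ : θ ≠ 0) :
    IsCompact {t : ℝ | 0 ≤ t ∧ t • θ ∈ K} := by
  obtain ⟨R, hR⟩ := hK.isBounded.subset_closedBall 0
  have hθpos : 0 < ‖θ‖ := norm_pos_iff.mpr hθ
  refine (isCompact_Icc (a := 0) (b := R / ‖θ‖)).of_isClosed_subset ?_ ?_
  · exact isClosed_Ici.inter (hK.isClosed.preimage (continuous_id.smul continuous_const))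
  · rintro t ⟨ht, htK⟩
    have hnorm := mem_closedBall_zero_iff.mp (hR htK)
    rw [norm_smul, Real.norm_of_nonneg ht] at hnorm
    exact ⟨ht, (le_div_iff₀ hθpos).mpr hnorm⟩

lemma le_radialFn (hK : IsCompact K) {θ : Euc n} (hθ : θ ≠ 0) {t : ℝ} (ht : 0 ≤ t)
    (htK : t • θ ∈ K) : t ≤ radialFn K θ :=
  le_csSup (isCompact_radialSet hK hθ).bddAbove ⟨ht, htK⟩

lemma radialFn_smul_mem (hK : IsCompact K) {θ : Euc n} (hθ : θ ≠ 0) {t : ℝ} (ht : 0 ≤ t)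
    (htK : t • θ ∈ K) : radialFn K θ • θ ∈ K :=
  ((isCompact_radialSet hK hθ).sSup_mem ⟨t, ht, htK⟩).2

lemma le_suppFn (hK : IsCompact K) {y : Euc n} (hy : y ∈ K) (u : Euc n) :
    ⟪y, u⟫ ≤ suppFn K u :=
  le_csSup (hK.image (continuous_id.inner continuous_const)).bddAbove ⟨y, hy, rfl⟩

lemma le_suppFn_of_closedBall_subset (hK : IsCompact K) {r : ℝ} (hr : 0 ≤ r)
    (hball : closedBall 0 r ⊆ K) {u : Euc n} (hu : ‖u‖ = 1) : r ≤ suppFn K u := by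
  have hru : r • u ∈ K := hball (by simp [norm_smul, hu, abs_of_nonneg hr])
  calc r = ⟪r • u, u⟫ := by rw [real_inner_smul_left, real_inner_self_eq_norm_sq, hu]; ring
    _ ≤ suppFn K u := le_suppFn hK hru u

end RadialSupport

theorem gauss_map_close_to_id_of_cover_general {n : ℕ}
    (K : Set (Euc n)) (hKcomp : IsCompact K)
    (r : ℝ) (hr : r ∈ Set.Ioc (0 : ℝ) 1) (hball : closedBall (0 : Euc n) r ⊆ K)
    (N : ℕ) (x : Fin N → Euc n)
    (hcover : K ⊆ ⋃ i, x i +ᵥ closedBall (0 : Euc n) 1)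
    (ε : ℝ)
    (θ : Euc n) (hθ : θ ∈ sphere (0 : Euc n) 1)
    (hortho : ∀ i, x i ≠ 0 → |⟪‖x i‖⁻¹ • x i, θ⟫| ≤ ε)
    (u : Euc n) (hu : u ∈ sphere (0 : Euc n) 1)
    (hnormal : suppFn K u = ⟪u, radialFn K θ • θ⟫) :
    r * Real.sqrt (1 - ε ^ 2) ≤ ⟪u, θ⟫ := by
  rw [mem_sphere_zero_iff_norm] at hθ hu
  have hθ0 : θ ≠ 0 := norm_ne_zero_iff.mp (by rw [hθ]; exact one_ne_zero)
  set ρ := radialFn K θ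
  have hrθ : r • θ ∈ K := hball (by simp [norm_smul, hθ, abs_of_pos hr.1])
  have hrρ : r ≤ ρ := le_radialFn hKcomp hθ0 hr.1.le hrθ
  have hρK : ρ • θ ∈ K := radialFn_smul_mem hKcomp hθ0 hr.1.le hrθ
  have hrinner : r ≤ ρ * ⟪u, θ⟫ := by
    rw [← real_inner_smul_right, ← hnormal]
    exact le_suppFn_of_closedBall_subset hKcomp hr.1.le hball hu
  obtain ⟨i, hi⟩ := mem_iUnion.mp (hcover hρK)
  rw [vadd_closedBall_zero, mem_closedBall, dist_eq_norm] at hi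
  have hρs : ρ * √(1 - ε ^ 2) ≤ 1 := (mul_sqrt_one_sub_sq_le_norm_smul_sub (hr.1.trans_le hrρ).le
    hθ (abs_inner_le_mul_norm_of_abs_inner_normalize_le (hortho i))).trans hi
  have hinner : 0 ≤ ⟪u, θ⟫ :=
    nonneg_of_mul_nonneg_right (hr.1.le.trans hrinner) (hr.1.trans_le hrρ)
  calc r * √(1 - ε ^ 2) ≤ ρ * ⟪u, θ⟫ * √(1 - ε ^ 2) :=
        mul_le_mul_of_nonneg_right hrinner (Real.sqrt_nonneg _)
    _ = ρ * √(1 - ε ^ 2) * ⟪u, θ⟫ := by ring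
    _ ≤ ⟪u, θ⟫ := mul_le_of_le_one_left hinner hρs

/-- Let `K ⊆ ℝⁿ` be a convex body containing `r·B₂ⁿ` for some `r ∈ (0,1]`, covered by
unit balls centered at `x₁, …, x_N`. Let `ε ∈ (0,1)` and `θ ∈ S^{n−1}` be `ε`-orthogonal
to every normalized center. Then every unit vector `u` in the normal cone of `K` at
`ρ_K(θ)·θ`, i.e. every unit `u` with `h_K(u) = ⟨u, ρ_K(θ)·θ⟩`, satisfies
`⟨u, θ⟩ ≥ r√(1−ε²)`. -/
theorem gauss_map_close_to_id_of_cover {n : ℕ}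
    (K : Set (Euc n)) (hKcomp : IsCompact K) (hKconv : Convex ℝ K)
    (r : ℝ) (hr : r ∈ Set.Ioc (0 : ℝ) 1) (hball : closedBall (0 : Euc n) r ⊆ K)
    (N : ℕ) (x : Fin N → Euc n)
    (hcover : K ⊆ ⋃ i, x i +ᵥ closedBall (0 : Euc n) 1)
    (ε : ℝ) (hε : ε ∈ Set.Ioo (0 : ℝ) 1)
    (θ : Euc n) (hθ : θ ∈ sphere (0 : Euc n) 1)
    (hortho : ∀ i, x i ≠ 0 → |⟪‖x i‖⁻¹ • x i, θ⟫| ≤ ε)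
    (u : Euc n) (hu : u ∈ sphere (0 : Euc n) 1)
    (hnormal : suppFn K u = ⟪u, radialFn K θ • θ⟫) :
    r * Real.sqrt (1 - ε ^ 2) ≤ ⟪u, θ⟫ :=
  gauss_map_close_to_id_of_cover_general K hKcomp r hr hball N x hcover ε θ hθ hortho u hu hnormal
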